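/- arXiv:0707.3151 — 3 statements merged into one kernel-verified Lean document; each statement's English description precedes it below -/
import Mathlib

section
/- (First Commutator Formula) Let R be a commutative ring, α ∈ GL_n(R) with matrix A, b ∈ R, i ∈ {1,...,n}, f ∈ R[X₁,...,X̂_i,...,Xₙ], and ε = e_i(b f(X)). Let a be the i-th column of A and Y a new variable. Then (α ε α⁻¹)^{[1]} = κ ν κ⁻¹ ν⁻¹ in GA_{n+1}(R), where κ = (X + aᵗ b Y, Y) and ν = (X, Y + f(A⁻¹X)). -/
open MvPolynomial

noncomputable section

/-- An elementary automorphism of the polynomial ring: it adds to one variable `X i`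
a polynomial `f` not involving `X i`, and fixes all other variables. -/
def IsElementaryAut {R : Type*} [CommRing R] {n : ℕ}
    (e : MvPolynomial (Fin n) R ≃ₐ[R] MvPolynomial (Fin n) R) : Prop :=
  ∃ (i : Fin n) (f : MvPolynomial (Fin n) R), degreeOf i f = 0 ∧
    e (X i) = X i + f ∧ ∀ j : Fin n, j ≠ i → e (X j) = X j

/-- `EA R n`: the subgroup generated by elementary automorphisms. -/
def EA (R : Type*) [CommRing R] (n : ℕ) :
    Subgroup (MvPolynomial (Fin n) R ≃ₐ[R] MvPolynomial (Fin n) R) :=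
  Subgroup.closure {e | IsElementaryAut e}

/-- A linear automorphism: each variable is sent to a homogeneous polynomial of degree 1. -/
def IsLinearAut {R : Type*} [CommRing R] {n : ℕ}
    (φ : MvPolynomial (Fin n) R ≃ₐ[R] MvPolynomial (Fin n) R) : Prop :=
  ∀ i, (φ (X i)).IsHomogeneous 1

/-- `TA R n`: the subgroup of tame automorphisms, generated by linear and elementary ones. -/
def TA (R : Type*) [CommRing R] (n : ℕ) :
    Subgroup (MvPolynomial (Fin n) R ≃ₐ[R] MvPolynomial (Fin n) R) :=
  Subgroup.closure ({e | IsElementaryAut e} ∪ {φ | IsLinearAut φ})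

/-- The Jacobian determinant of a polynomial automorphism. -/
def jacDet {R : Type*} [CommRing R] {n : ℕ}
    (φ : MvPolynomial (Fin n) R ≃ₐ[R] MvPolynomial (Fin n) R) : MvPolynomial (Fin n) R :=
  Matrix.det (Matrix.of fun i j => pderiv j (φ (X i)))

/-- Stabilization `φ^{[m]}` of an automorphism in `n` variables to one in `n + m` variables:
it acts as `φ` on the first `n` variables and fixes the last `m` variables. -/
def stab (R : Type*) [CommRing R] (n m : ℕ)
    (φ : MvPolynomial (Fin n) R ≃ₐ[R] MvPolynomial (Fin n) R) :
    MvPolynomial (Fin (n + m)) R ≃ₐ[R] MvPolynomial (Fin (n + m)) R :=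
  ((renameEquiv R (((finSumFinEquiv (m := n) (n := m)).symm).trans
      (Equiv.sumComm (Fin n) (Fin m)))).trans
    ((sumAlgEquiv R (Fin m) (Fin n)).trans
      ((mapAlgEquiv (Fin m) φ).trans
        ((sumAlgEquiv R (Fin m) (Fin n)).symm.trans
          (renameEquiv R ((Equiv.sumComm (Fin m) (Fin n)).trans finSumFinEquiv))))))

/-!
The identity is checked on the variables after rewriting it as `ν κ = κ ν (α⁻¹ ε α)^{[1]}`.
The point is that `g = f(A⁻¹X)` is fixed by `κ` as well as by `ν`: `κ` shifts the vector `X` by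
`bY a`, hence `A⁻¹X` by `bY eᵢ`, and `f` does not involve `Xᵢ`. Conjugating `ε` by `α` gives
`X ↦ X + a b f(A⁻¹X)`, so `(α ε α⁻¹)^{[1]}` sends `Xⱼ ↦ Xⱼ + aⱼ b g` and fixes `Y`.
-/

namespace MvPolynomial

theorem aeval_congr_of_degreeOf_eq_zero {R S σ : Type*} [CommSemiring R] [CommSemiring S]
    [Algebra R S] {i : σ} {f : MvPolynomial σ R} (hf : degreeOf i f = 0) {g g' : σ → S}
    (h : ∀ j, j ≠ i → g j = g' j) : aeval g f = aeval g' f :=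
  eval₂Hom_congr' rfl (fun j hj _ => h j fun hji => (mem_vars_iff_degreeOf_ne_zero.mp hj)
    (hji ▸ hf)) rfl

theorem algEquiv_C {σ τ R : Type*} [CommSemiring R]
    (e : MvPolynomial σ R ≃ₐ[R] MvPolynomial τ R) (r : R) : e (C r) = C r :=
  e.commutes r

theorem sumAlgEquiv_symm_C {R S₁ S₂ : Type*} [CommSemiring R] (p : MvPolynomial S₂ R) :
    (sumAlgEquiv R S₁ S₂).symm (C p) = rename Sum.inr p :=
  (AlgEquiv.symm_apply_eq _).mpr (AlgHom.congr_fun (sumAlgEquiv_comp_rename_inr R S₁ S₂) p).symm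

end MvPolynomial

section Stabilization

variable (R : Type*) [CommRing R] (n m : ℕ)
    (φ : MvPolynomial (Fin n) R ≃ₐ[R] MvPolynomial (Fin n) R)

theorem stab_X_castAdd (k : Fin n) :
    stab R n m φ (X (Fin.castAdd m k)) = rename (Fin.castAdd m) (φ (X k)) := by
  simp only [stab, AlgEquiv.trans_apply, renameEquiv_apply, rename_X, Equiv.trans_apply,
    Equiv.sumComm_apply, finSumFinEquiv_symm_apply_castAdd, Sum.swap_inl, sumAlgEquiv_X_inr,
    mapAlgEquiv_apply, map_C, sumAlgEquiv_symm_C, rename_rename]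
  rfl

theorem stab_X_natAdd (k : Fin m) : stab R n m φ (X (Fin.natAdd n k)) = X (Fin.natAdd n k) := by
  simp [stab]

end Stabilization

namespace MvPolynomial

variable {R σ ι : Type*} [CommRing R] [Fintype ι]

theorem sum_C_mul_add_C_mul (A B : Matrix ι ι R) (v : ι → MvPolynomial σ R)
    (t : MvPolynomial σ R) (i j : ι) :
    ∑ k, C (B j k) * (v k + C (A k i) * t) = ∑ k, C (B j k) * v k + C ((B * A) j i) * t := by
  simp only [mul_add, Finset.sum_add_distrib, Matrix.mul_apply, map_sum, Finset.sum_mul, map_mul,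
    mul_assoc]

theorem map_aeval_eq_self_of_shift_along_column [DecidableEq ι] {A B : Matrix ι ι R}
    (hBA : B * A = 1) {i : ι} {f : MvPolynomial ι R} (hf : degreeOf i f = 0)
    (φ : MvPolynomial σ R →ₐ[R] MvPolynomial σ R) (v : ι → MvPolynomial σ R)
    (t : MvPolynomial σ R) (hφ : ∀ k, φ (v k) = v k + C (A k i) * t) :
    φ (aeval (fun j => ∑ k, C (B j k) * v k) f) = aeval (fun j => ∑ k, C (B j k) * v k) f := by
  rw [comp_aeval_apply]
  refine aeval_congr_of_degreeOf_eq_zero hf fun j hj => ?_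
  simp only [map_sum, map_mul, algHom_C, algebraMap_eq, hφ, sum_C_mul_add_C_mul, hBA,
    Matrix.one_apply_ne hj, map_zero, zero_mul, add_zero]

theorem conj_elementary_apply_X (α ε : MvPolynomial ι R ≃ₐ[R] MvPolynomial ι R)
    {A B : Matrix ι ι R} (hα : ∀ j, α (X j) = ∑ k, C (A j k) * X k)
    (hαinv : ∀ j, α⁻¹ (X j) = ∑ k, C (B j k) * X k) {i : ι} {p : MvPolynomial ι R}
    (hεi : ε (X i) = X i + p) (hε : ∀ j, j ≠ i → ε (X j) = X j) (j : ι) :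
    (α⁻¹ * ε * α) (X j) = X j + C (A j i) * aeval (fun j => ∑ k, C (B j k) * X k) p := by
  classical
  have hεX : ∀ k, ε (X k) = X k + if k = i then p else 0 := by
    intro k
    split_ifs with hk
    · rw [hk, hεi]
    · rw [hε k hk, add_zero]
  have hεα : ε (α (X j)) = α (X j) + C (A j i) * p := by
    simp only [hα, map_sum, map_mul, algEquiv_C, hεX, mul_add, mul_ite, mul_zero,
      Finset.sum_add_distrib, Finset.sum_ite_eq', Finset.mem_univ, if_true]
  have hαinv_p : α⁻¹ p = aeval (fun j => ∑ k, C (B j k) * X k) p := by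
    conv_lhs => rw [← aeval_X_left_apply p]
    exact (comp_aeval_apply X α⁻¹.toAlgHom p).trans
      (congrArg (fun g => aeval g p) (_root_.funext hαinv))
  show α⁻¹ (ε (α (X j))) = _
  rw [hεα, map_add, map_mul, algEquiv_C, hαinv_p, ← AlgEquiv.mul_apply, inv_mul_cancel,
    AlgEquiv.one_apply]

end MvPolynomial

/-- Automorphisms act on polynomials, so composition is reversed with respect to maps of affine
space: the paper's `(α ε α⁻¹)^{[1]} = κ ν κ⁻¹ ν⁻¹` reads
`stab (α⁻¹ * ε * α) = ν⁻¹ * κ⁻¹ * ν * κ`. -/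
theorem first_commutator_formula_general
    (R : Type*) [CommRing R] (n : ℕ) (i : Fin n) (b : R)
    (A B : Matrix (Fin n) (Fin n) R) (hBA : B * A = 1)
    (f : MvPolynomial (Fin n) R) (hf : degreeOf i f = 0)
    (α : MvPolynomial (Fin n) R ≃ₐ[R] MvPolynomial (Fin n) R)
    (hα : ∀ j, α (X j) = ∑ k, C (A j k) * X k)
    (hαinv : ∀ j, α⁻¹ (X j) = ∑ k, C (B j k) * X k)
    (ε : MvPolynomial (Fin n) R ≃ₐ[R] MvPolynomial (Fin n) R)
    (hε1 : ε (X i) = X i + C b * f) (hε2 : ∀ j, j ≠ i → ε (X j) = X j)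
    (κ ν : MvPolynomial (Fin (n + 1)) R ≃ₐ[R] MvPolynomial (Fin (n + 1)) R)
    (hκ1 : ∀ j : Fin n, κ (X j.castSucc) = X j.castSucc + C (A j i * b) * X (Fin.last n))
    (hκ2 : κ (X (Fin.last n)) = X (Fin.last n))
    (hν1 : ∀ j : Fin n, ν (X j.castSucc) = X j.castSucc)
    (hν2 : ν (X (Fin.last n)) = X (Fin.last n) +
      aeval (fun j : Fin n => ∑ k : Fin n, C (B j k) * X k.castSucc) f) :
    stab R n 1 (α⁻¹ * ε * α) = ν⁻¹ * κ⁻¹ * ν * κ := by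
  set g := aeval (fun j : Fin n => ∑ k : Fin n, C (B j k) * X k.castSucc) f
  have hνg : ν g = g := by
    refine (comp_aeval_apply _ ν.toAlgHom f).trans ?_
    simp only [AlgEquiv.coe_toAlgHom, map_sum, map_mul, algEquiv_C, hν1, g]
  have hκg : κ g = g :=
    map_aeval_eq_self_of_shift_along_column hBA hf κ.toAlgHom _ (C b * X (Fin.last n))
      fun k => by rw [AlgEquiv.coe_toAlgHom, hκ1, map_mul, mul_assoc]
  have hstab : ∀ k : Fin n,
      stab R n 1 (α⁻¹ * ε * α) (X k.castSucc) = X k.castSucc + C (A k i * b) * g := by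
    intro k
    refine (stab_X_castAdd R n 1 _ k).trans ?_
    rw [conj_elementary_apply_X α ε hα hαinv hε1 hε2, map_mul, aeval_C, algebraMap_eq]
    simp only [map_add, map_mul, rename_X, rename_C, comp_aeval_apply, map_sum]
    rw [mul_assoc]
    rfl
  have hcomm : ν * κ = κ * ν * stab R n 1 (α⁻¹ * ε * α) := by
    refine AlgEquiv.coe_toAlgHom_injective (algHom_ext fun j => ?_)
    simp only [AlgEquiv.coe_toAlgHom, AlgEquiv.mul_apply]
    induction j using Fin.lastCases with
    | last =>
      rw [show stab R n 1 (α⁻¹ * ε * α) (X (Fin.last n)) = X (Fin.last n) from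
        stab_X_natAdd R n 1 _ 0, hκ2, hν2, map_add, hκ2, hκg]
    | cast k =>
      simp only [hstab, hκ1, hκg, hν1, hν2, hνg, algEquiv_C, map_add, map_mul]
      ring
  rw [mul_assoc (ν⁻¹ * κ⁻¹), hcomm]
  group

/-- First Commutator Formula.  Let `α ∈ GL_n(R)` be the linear automorphism with matrix `A`
(with inverse matrix `B`), `ε = e_i(b f)` with `f` not involving `X_i`, and let `Y` be a new
variable.  Then `(α ε α⁻¹)^{[1]} = κ ν κ⁻¹ ν⁻¹` (geometric composition; as algebra
automorphisms, `stab (α⁻¹ * ε * α) = ν⁻¹ * κ⁻¹ * ν * κ`), where `κ = (X + aᵗ b Y, Y)` for `a`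
the `i`-th column of `A`, and `ν = (X, Y + f(A⁻¹X))`. -/
theorem first_commutator_formula
    (R : Type*) [CommRing R] (n : ℕ) (i : Fin n) (b : R)
    (A B : Matrix (Fin n) (Fin n) R) (hAB : A * B = 1) (hBA : B * A = 1)
    (f : MvPolynomial (Fin n) R) (hf : degreeOf i f = 0)
    (α : MvPolynomial (Fin n) R ≃ₐ[R] MvPolynomial (Fin n) R)
    (hα : ∀ j, α (X j) = ∑ k, C (A j k) * X k)
    (hαinv : ∀ j, α⁻¹ (X j) = ∑ k, C (B j k) * X k)
    (ε : MvPolynomial (Fin n) R ≃ₐ[R] MvPolynomial (Fin n) R)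
    (hε1 : ε (X i) = X i + C b * f) (hε2 : ∀ j, j ≠ i → ε (X j) = X j)
    (κ ν : MvPolynomial (Fin (n + 1)) R ≃ₐ[R] MvPolynomial (Fin (n + 1)) R)
    (hκ1 : ∀ j : Fin n, κ (X j.castSucc) = X j.castSucc + C (A j i * b) * X (Fin.last n))
    (hκ2 : κ (X (Fin.last n)) = X (Fin.last n))
    (hν1 : ∀ j : Fin n, ν (X j.castSucc) = X j.castSucc)
    (hν2 : ν (X (Fin.last n)) = X (Fin.last n) +
      aeval (fun j : Fin n => ∑ k : Fin n, C (B j k) * X k.castSucc) f) :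
    stab R n 1 (α⁻¹ * ε * α) = ν⁻¹ * κ⁻¹ * ν * κ :=
  first_commutator_formula_general R n i b A B hBA f hf α hα hαinv ε hε1 hε2 κ ν hκ1 hκ2 hν1 hν2

end
end

section
/- Let R be a commutative ring, t ∈ R a non-zero-divisor, m ≥ 0 an integer, and α ∈ GL_n(R_t) such that t^m α and t^m α⁻¹ have all entries in R. Let ε = e_i(g(X)) with g ∈ t^{m+dm} R[X₁,...,X̂_i,...,Xₙ], where d = deg g. Then α ε α⁻¹ ∈ GA_n(R), and its one-step stabilization (α ε α⁻¹)^{[1]} lies in EA_{n+1}(R). -/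
open MvPolynomial

noncomputable section

section Aux
variable {R : Type*} [CommRing R] {σ : Type*}

/-- Build an automorphism from two substitutions inverse to each other. -/
def mkAut (f g : σ → MvPolynomial σ R)
    (h1 : ∀ s, aeval f (g s) = X s) (h2 : ∀ s, aeval g (f s) = X s) :
    MvPolynomial σ R ≃ₐ[R] MvPolynomial σ R :=
  AlgEquiv.ofAlgHom (aeval f) (aeval g)
    (by refine MvPolynomial.algHom_ext fun s => ?_; simpa using h1 s)
    (by refine MvPolynomial.algHom_ext fun s => ?_; simpa using h2 s)

@[simp] theorem mkAut_apply (f g : σ → MvPolynomial σ R) (h1 h2) (p : MvPolynomial σ R) :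
    mkAut f g h1 h2 p = aeval f p := rfl

@[simp] theorem mkAut_symm_apply (f g : σ → MvPolynomial σ R) (h1 h2) (p : MvPolynomial σ R) :
    (mkAut f g h1 h2).symm p = aeval g p := rfl

theorem degreeOf_eq_zero_of (i : σ) (p : MvPolynomial σ R)
    (h : ∀ c ∈ p.support, c i = 0) : degreeOf i p = 0 := by
  rw [degreeOf_eq_sup]
  exact Nat.le_zero.mp (Finset.sup_le fun c hc => Nat.le_zero.mpr (h c hc))

theorem support_single_var (c : R) (y : σ) (d : σ →₀ ℕ) (hd : d ∈ (C c * X y : MvPolynomial σ R).support) :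
    d = Finsupp.single y 1 := by
  classical
  have : (C c * X y : MvPolynomial σ R) = monomial (Finsupp.single y 1) c := by
    rw [C_mul_X_eq_monomial]
  rw [this] at hd
  exact Finset.mem_singleton.mp (support_monomial_subset hd)

theorem aequiv_ext {e e' : MvPolynomial σ R ≃ₐ[R] MvPolynomial σ R}
    (h : ∀ s, e (X s) = e' (X s)) : e = e' := by
  have h2 : (e : MvPolynomial σ R →ₐ[R] MvPolynomial σ R) = e' := MvPolynomial.algHom_ext h
  exact AlgEquiv.ext fun p => AlgHom.congr_fun h2 p

section tau
variable {n : ℕ} (cs : Fin n → R)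

/-- substitution adding `± cs j * Y` to `X j` for `j ∈ S` -/
def tauF (S : Finset (Fin n)) (e : R) : Fin (n + 1) → MvPolynomial (Fin (n + 1)) R :=
  fun k => Fin.lastCases (X (Fin.last n))
    (fun j => X j.castSucc + if j ∈ S then C (e * cs j) * X (Fin.last n) else 0) k

theorem tauF_last (S : Finset (Fin n)) (e : R) : tauF cs S e (Fin.last n) = X (Fin.last n) := by
  simp [tauF]

theorem tauF_castSucc (S : Finset (Fin n)) (e : R) (j : Fin n) :
    tauF cs S e j.castSucc =
      X j.castSucc + if j ∈ S then C (e * cs j) * X (Fin.last n) else 0 := by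
  simp [tauF]

theorem tau_inv (S : Finset (Fin n)) (e e' : R) (h : e + e' = 0) :
    ∀ s, aeval (tauF cs S e) (tauF cs S e' s) = X s := by
  intro s
  induction s using Fin.lastCases with
  | last => simp [tauF_last, tauF_castSucc]
  | cast j =>
      simp only [tauF_last, tauF_castSucc, map_add, aeval_X, apply_ite (aeval (tauF cs S e)),
        map_mul, aeval_C, map_zero]
      rw [← MvPolynomial.algebraMap_eq]
      by_cases hj : j ∈ S
      · simp only [hj, if_true, add_assoc, map_mul]
        rw [← add_mul, ← add_mul, ← map_add, h]
        simp
      · simp [hj]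

end tau

section tau2
variable {n : ℕ} (cs : Fin n → R)

def tauAut (S : Finset (Fin n)) : MvPolynomial (Fin (n + 1)) R ≃ₐ[R] MvPolynomial (Fin (n + 1)) R :=
  mkAut (tauF cs S 1) (tauF cs S (-1))
    (tau_inv cs S 1 (-1) (by ring)) (tau_inv cs S (-1) 1 (by ring))

theorem tauAut_last (S : Finset (Fin n)) : tauAut cs S (X (Fin.last n)) = X (Fin.last n) := by
  simp [tauAut, tauF_last]

theorem tauAut_castSucc (S : Finset (Fin n)) (j : Fin n) :
    tauAut cs S (X j.castSucc) =
      X j.castSucc + if j ∈ S then C (cs j) * X (Fin.last n) else 0 := by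
  simp [tauAut, tauF_castSucc]

theorem tauAut_symm_last (S : Finset (Fin n)) :
    (tauAut cs S).symm (X (Fin.last n)) = X (Fin.last n) := by
  simp [tauAut, tauF_last]

theorem tauAut_symm_castSucc (S : Finset (Fin n)) (j : Fin n) :
    (tauAut cs S).symm (X j.castSucc) =
      X j.castSucc - if j ∈ S then C (cs j) * X (Fin.last n) else 0 := by
  simp only [tauAut, mkAut_symm_apply, aeval_X, tauF_castSucc, neg_one_mul, map_neg, neg_mul,
    sub_eq_add_neg, C_neg]
  split <;> simp

theorem tauAut_singleton_elementary (a : Fin n) : IsElementaryAut (tauAut cs {a}) := by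
  classical
  refine ⟨a.castSucc, C (cs a) * X (Fin.last n), ?_, ?_, ?_⟩
  · refine degreeOf_eq_zero_of _ _ fun c hc => ?_
    rw [support_single_var _ _ _ hc]
    rw [Finsupp.single_apply, if_neg]
    exact fun h => absurd (congrArg Fin.val h) (by simp [Fin.last, Fin.castSucc, Fin.castAdd]; omega)
  · rw [tauAut_castSucc, if_pos (Finset.mem_singleton_self a)]
  · intro j hj
    induction j using Fin.lastCases with
    | last => exact tauAut_last cs {a}
    | cast j' =>
        rw [tauAut_castSucc, if_neg, add_zero]
        simp only [Finset.mem_singleton]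
        exact fun h => hj (by rw [h])

theorem tauAut_insert (a : Fin n) (S : Finset (Fin n)) (ha : a ∉ S) :
    tauAut cs (insert a S) = tauAut cs {a} * tauAut cs S := by
  classical
  refine aequiv_ext fun s => ?_
  have hmul : ∀ (p : MvPolynomial (Fin (n+1)) R), (tauAut cs {a} * tauAut cs S) p
      = tauAut cs {a} (tauAut cs S p) := fun p => rfl
  induction s using Fin.lastCases with
  | last => rw [tauAut_last, hmul, tauAut_last, tauAut_last]
  | cast j =>
      have hC : (tauAut cs {a}) (C (cs j) * X (Fin.last n)) = C (cs j) * X (Fin.last n) := by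
        rw [map_mul, tauAut_last, ← MvPolynomial.algebraMap_eq, AlgEquiv.commutes]
      rw [hmul, tauAut_castSucc, tauAut_castSucc, map_add, tauAut_castSucc,
        apply_ite (tauAut cs {a}), hC, map_zero]
      by_cases hja : j = a
      · subst hja
        simp [ha]
      · by_cases hjS : j ∈ S <;> simp [hja, hjS, add_comm]

theorem tauAut_mem_EA (S : Finset (Fin n)) : tauAut cs S ∈ EA R (n + 1) := by
  classical
  induction S using Finset.induction_on with
  | empty =>
      have : tauAut cs ∅ = 1 := by
        refine aequiv_ext fun s => ?_
        induction s using Fin.lastCases with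
        | last => rw [tauAut_last]; rfl
        | cast j => rw [tauAut_castSucc]; simp
      rw [this]; exact one_mem _
  | insert _ _ ha ih =>
      rw [tauAut_insert cs _ _ ha]
      exact mul_mem (Subgroup.subset_closure (tauAut_singleton_elementary cs _)) ih

end tau2

section uu
variable {n : ℕ} (h₀ : MvPolynomial (Fin n) R)

def uF (e : R) : Fin (n + 1) → MvPolynomial (Fin (n + 1)) R :=
  fun k => Fin.lastCases (X (Fin.last n) + C e * rename Fin.castSucc h₀)
    (fun j => X j.castSucc) k

theorem uF_last (e : R) :
    uF h₀ e (Fin.last n) = X (Fin.last n) + C e * rename Fin.castSucc h₀ := by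
  simp [uF]

theorem uF_castSucc (e : R) (j : Fin n) : uF h₀ e j.castSucc = X j.castSucc := by
  simp [uF]

theorem aeval_uF_rename (e : R) :
    aeval (uF h₀ e) (rename Fin.castSucc h₀) = rename Fin.castSucc h₀ := by
  rw [aeval_rename]
  have : (uF h₀ e) ∘ Fin.castSucc = fun j : Fin n => X (R := R) (Fin.castSucc j) := by
    funext j; exact uF_castSucc h₀ e j
  rw [this, rename_eq_aeval]
  rfl

theorem u_inv (e e' : R) (h : e + e' = 0) : ∀ s, aeval (uF h₀ e) (uF h₀ e' s) = X s := by
  intro s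
  induction s using Fin.lastCases with
  | last =>
      rw [uF_last, map_add, aeval_X, uF_last, map_mul, aeval_C, aeval_uF_rename, add_assoc,
        ← add_mul, ← MvPolynomial.algebraMap_eq, ← map_add, h]
      simp
  | cast j => rw [uF_castSucc, aeval_X, uF_castSucc]

def uAut : MvPolynomial (Fin (n + 1)) R ≃ₐ[R] MvPolynomial (Fin (n + 1)) R :=
  mkAut (uF h₀ 1) (uF h₀ (-1)) (u_inv h₀ 1 (-1) (by ring)) (u_inv h₀ (-1) 1 (by ring))

theorem uAut_last : uAut h₀ (X (Fin.last n)) = X (Fin.last n) + rename Fin.castSucc h₀ := by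
  simp [uAut, uF_last]

theorem uAut_castSucc (j : Fin n) : uAut h₀ (X j.castSucc) = X j.castSucc := by
  simp [uAut, uF_castSucc]

theorem uAut_symm_last :
    (uAut h₀).symm (X (Fin.last n)) = X (Fin.last n) - rename Fin.castSucc h₀ := by
  simp [uAut, uF_last, sub_eq_add_neg]

theorem uAut_symm_castSucc (j : Fin n) : (uAut h₀).symm (X j.castSucc) = X j.castSucc := by
  simp [uAut, uF_castSucc]

theorem degreeOf_last_rename (p : MvPolynomial (Fin n) R) :
    degreeOf (Fin.last n) (rename (Fin.castSucc (n := n)) p) = 0 := by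
  classical
  refine degreeOf_eq_zero_of _ _ fun c hc => ?_
  by_contra hne
  have hlast : Fin.last n ∈ (rename (Fin.castSucc (n := n)) p).vars :=
    (mem_vars _).mpr ⟨c, hc, Finsupp.mem_support_iff.mpr hne⟩
  have := vars_rename (Fin.castSucc (n := n)) p hlast
  simp only [Finset.mem_image] at this
  obtain ⟨j, -, hj⟩ := this
  exact absurd (congrArg Fin.val hj) (by simp [Fin.last]; omega)

theorem uAut_mem_EA : uAut h₀ ∈ EA R (n + 1) := by
  refine Subgroup.subset_closure ⟨Fin.last n, rename Fin.castSucc h₀,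
    degreeOf_last_rename h₀, uAut_last h₀, fun j hj => ?_⟩
  obtain ⟨j', rfl⟩ : ∃ j' : Fin n, j = j'.castSucc := by
    refine ⟨⟨j.1, ?_⟩, ?_⟩
    · have := j.2
      rcases Nat.lt_succ_iff_lt_or_eq.mp this with h' | h'
      · exact h'
      · exact absurd (Fin.ext h' : j = Fin.last n) hj
    · rfl
  exact uAut_castSucc h₀ j'

end uu
end Aux

section Aux2
theorem sumAlgEquiv_symm_C (R : Type*) [CommRing R] {S₁ S₂ : Type*} (p : MvPolynomial S₂ R) :
    (sumAlgEquiv R S₁ S₂).symm (C p) = rename Sum.inr p := by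
  apply (sumAlgEquiv R S₁ S₂).injective
  rw [AlgEquiv.apply_symm_apply]
  exact (congrArg (fun (ψ : _ →ₐ[R] _) => ψ p) (sumAlgEquiv_comp_rename_inr R S₁ S₂)).symm

theorem stab_X_castSucc (R : Type*) [CommRing R] (n : ℕ)
    (φ : MvPolynomial (Fin n) R ≃ₐ[R] MvPolynomial (Fin n) R) (j : Fin n) :
    stab R n 1 φ (X j.castSucc) = rename Fin.castSucc (φ (X j)) := by
  have e1 : (j.castSucc : Fin (n+1)) = Fin.castAdd 1 j := rfl
  rw [stab]
  simp only [AlgEquiv.trans_apply, renameEquiv_apply, rename_X, Equiv.trans_apply,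
    e1, finSumFinEquiv_symm_apply_castAdd, Equiv.sumComm_apply, Sum.swap_inl,
    sumAlgEquiv_X_inr, mapAlgEquiv_apply, map_C, sumAlgEquiv_symm_C,
    rename_rename]
  rfl

theorem stab_X_last (R : Type*) [CommRing R] (n : ℕ)
    (φ : MvPolynomial (Fin n) R ≃ₐ[R] MvPolynomial (Fin n) R) :
    stab R n 1 φ (X (Fin.last n)) = X (Fin.last n) := by
  rw [stab]
  simp only [AlgEquiv.trans_apply, renameEquiv_apply, rename_X, Equiv.trans_apply,
    finSumFinEquiv_symm_last, Equiv.sumComm_apply, Sum.swap_inr,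
    sumAlgEquiv_X_inl, mapAlgEquiv_apply, map_X]
  have : (X (0:Fin 1) : MvPolynomial (Fin 1) (MvPolynomial (Fin n) R)) =
      sumAlgEquiv R (Fin 1) (Fin n) (X (Sum.inl 0)) := by simp
  rw [this, AlgEquiv.symm_apply_apply]
  simp only [rename_X, Equiv.trans_apply, Equiv.sumComm_apply, Sum.swap_inl,
    finSumFinEquiv_apply_right]
  rfl

end Aux2

section Aux3
variable {R S : Type*} [CommRing R] [CommRing S]


theorem key_aux (f : R →+* S) (t : R) {n : ℕ} (m : ℕ)
    (B : Matrix (Fin n) (Fin n) S) (b : Fin n → Fin n → R)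
    (hb : ∀ k l, f (b k l) = f t ^ m * B k l)
    (g : MvPolynomial (Fin n) R)
    (hg : ∀ u, ∃ r, coeff u g = t ^ (m + g.totalDegree * m) * r) :
    ∃ h₀ : MvPolynomial (Fin n) R,
      eval₂ ((C : S →+* MvPolynomial (Fin n) S).comp f) (fun k => ∑ l, C (B k l) * X l) g
        = C (f t ^ m) * map f h₀ := by
  classical
  choose r hr using hg
  set d := g.totalDegree with hd
  set w : Fin n → MvPolynomial (Fin n) R := fun k => ∑ l, C (b k l) * X l with hw
  have hmapw : ∀ k, map f (w k) = C (f t ^ m) * ∑ l, C (B k l) * X l := by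
    intro k
    rw [hw]
    simp only [map_sum, map_mul, map_C, map_X, hb, C_mul, Finset.mul_sum, mul_assoc]
  refine ⟨∑ u ∈ g.support, C (t ^ ((d - ∑ k, u k) * m) * r u) * ∏ k, w k ^ u k, ?_⟩
  rw [eval₂_eq', map_sum, Finset.mul_sum]
  refine Finset.sum_congr rfl fun u hu => ?_
  have he : (∑ k, u k) ≤ d := by
    rw [hd]
    have h1 : (u.sum fun _ e => e) = ∑ k, u k := Finsupp.sum_fintype _ _ (fun _ => rfl)
    rw [← h1]
    exact Finset.le_sup (f := fun s : Fin n →₀ ℕ => s.sum fun _ e => e) hu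
  rw [map_mul, map_C, map_prod]
  simp only [map_pow, hmapw]
  rw [RingHom.comp_apply, hr u]
  simp only [mul_pow, Finset.prod_mul_distrib, Finset.prod_pow_eq_pow_sum]
  rw [← mul_assoc, ← mul_assoc]
  congr 1
  have h2 : (d - (∑ k, u k)) * m + (∑ k, u k) * m = d * m := by
    rw [← add_mul, Nat.sub_add_cancel he]
  have hs : f (t ^ (m + d * m) * r u)
      = (f t ^ m * f (t ^ ((d - ∑ k, u k) * m) * r u)) * (f t) ^ (m * (∑ k, u k)) := by
    rw [map_mul f, map_pow f, map_mul f, map_pow f,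
      show m + d * m = m + ((d - (∑ k, u k)) * m + m * (∑ k, u k)) by rw [mul_comm m, h2],
      pow_add, pow_add]
    ring
  rw [hs, C_mul, ← pow_mul, C_pow]
  simp [C_mul, C_pow]

/-- Applying a substitution to the key identity. -/
theorem subst_key {n : ℕ} (f : R →+* S) (t : R) (m : ℕ)
    (B : Matrix (Fin n) (Fin n) S)
    (g : MvPolynomial (Fin n) R) (h₀ : MvPolynomial (Fin n) R)
    (hh₀ : eval₂ ((C : S →+* MvPolynomial (Fin n) S).comp f) (fun k => ∑ l, C (B k l) * X l) g
      = C (f t ^ m) * map f h₀)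
    {σ' : Type*} (W : Fin n → MvPolynomial σ' S) :
    eval₂ ((C : S →+* MvPolynomial σ' S).comp f) (fun k => ∑ l, C (B k l) * W l) g
      = C (f t ^ m) * eval₂ ((C : S →+* MvPolynomial σ' S).comp f) W h₀ := by
  have hE := congrArg (eval₂Hom (C : S →+* MvPolynomial σ' S) W) hh₀
  rw [eval₂_comp_left (eval₂Hom (C : S →+* MvPolynomial σ' S) W)
    ((C : S →+* MvPolynomial (Fin n) S).comp f) _ g] at hE
  simp only [map_mul, eval₂Hom_C, coe_eval₂Hom, eval₂_map] at hE
  convert hE using 2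
  · ext r
    simp
  · funext k
    simp

theorem inv_aux {n : ℕ} (f : R →+* S) (hf : Function.Injective f) (t : R)
    (hu : IsUnit (f t)) (m : ℕ) (i : Fin n)
    (B : Matrix (Fin n) (Fin n) S) (c : Fin n → S) (cs : Fin n → R)
    (hcs : ∀ l, f (cs l) = f t ^ m * c l)
    (hBc : ∀ k, (∑ l, B k l * c l) = if k = i then 1 else 0)
    (g : MvPolynomial (Fin n) R) (hgi : degreeOf i g = 0)
    (h₀ : MvPolynomial (Fin n) R)
    (hh₀ : eval₂ ((C : S →+* MvPolynomial (Fin n) S).comp f) (fun k => ∑ l, C (B k l) * X l) g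
      = C (f t ^ m) * map f h₀)
    {σ' : Type*} (u : Fin n → MvPolynomial σ' R) (q : MvPolynomial σ' R) :
    aeval (fun k => u k + C (cs k) * q) h₀ = aeval u h₀ := by
  classical
  apply MvPolynomial.map_injective f hf
  have hmapaeval : ∀ w : Fin n → MvPolynomial σ' R, map f (aeval w h₀)
      = eval₂ ((C : S →+* MvPolynomial σ' S).comp f) (fun k => map f (w k)) h₀ := by
    intro w
    rw [aeval_def, MvPolynomial.algebraMap_eq, eval₂_comp_left (map f) C w h₀]
    congr 1
    ext r
    simp
  rw [hmapaeval, hmapaeval]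
  have hCunit : IsUnit (C (f t ^ m) : MvPolynomial σ' S) := (hu.pow m).map C
  rw [← hCunit.mul_right_inj, ← subst_key f t m B g h₀ hh₀, ← subst_key f t m B g h₀ hh₀]
  apply eval₂_congr
  intro k cm hk hcoeff
  have hki : k ≠ i := by
    intro h
    subst h
    have : cm k ≤ degreeOf k g := by
      rw [degreeOf_eq_sup]
      exact Finset.le_sup (f := fun m : Fin n →₀ ℕ => m k) (mem_support_iff.mpr hcoeff)
    rw [hgi] at this
    exact absurd (Nat.le_zero.mp this) (Finsupp.mem_support_iff.mp hk)
  simp only [map_add, map_mul, map_C]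
  rw [Finset.sum_congr rfl (fun l _ => by rw [mul_add, ← mul_assoc]), Finset.sum_add_distrib]
  have : (∑ l, C (B k l) * C (f (cs l)) * map f q) = 0 := by
    rw [← Finset.sum_mul]
    have : (∑ l, C (B k l) * C (f (cs l))) = (0 : MvPolynomial σ' S) := by
      simp only [hcs, ← C_mul, ← map_sum]
      rw [show (∑ l, B k l * (f t ^ m * c l)) = f t ^ m * ∑ l, B k l * c l by
        rw [Finset.mul_sum]; exact Finset.sum_congr rfl fun l _ => by ring]
      rw [hBc k, if_neg hki, mul_zero, map_zero]
    rw [this, zero_mul]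
  rw [this, add_zero]

end Aux3

/-- Let `t ∈ R` be a non-zero-divisor, `m ≥ 0`, and `α ∈ GL_n(R_t)` (with matrix `A` and
inverse matrix `B`) such that `α` and `α⁻¹` have `t`-order at most `m`, i.e. all entries of
`t^m A` and `t^m B` come from `R`.  Let `ε = e_i(g)` with `g ∈ t^{m+dm} R[X]` not involving
`X_i`, where `d = deg g`.  Then `α ε α⁻¹` lies in `GA_n(R)` — there is `ψ ∈ GA_n(R)` whose
base change to `R_t` is `α ε α⁻¹` — and its one-step stabilization `ψ^{[1]}` lies in
`EA_{n+1}(R)`. -/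
theorem conj_elementary_mem_EA_of_t_order
    (R : Type*) [CommRing R] (t : R) (ht : t ∈ nonZeroDivisors R) (n : ℕ) (m : ℕ) (i : Fin n)
    (A B : Matrix (Fin n) (Fin n) (Localization.Away t))
    (hAB : A * B = 1) (hBA : B * A = 1)
    (hA : ∀ j k, algebraMap R (Localization.Away t) t ^ m * A j k ∈
      Set.range (algebraMap R (Localization.Away t)))
    (hB : ∀ j k, algebraMap R (Localization.Away t) t ^ m * B j k ∈
      Set.range (algebraMap R (Localization.Away t)))
    (α : MvPolynomial (Fin n) (Localization.Away t) ≃ₐ[Localization.Away t]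
      MvPolynomial (Fin n) (Localization.Away t))
    (hα : ∀ j, α (X j) = ∑ k, C (A j k) * X k)
    (hαinv : ∀ j, α⁻¹ (X j) = ∑ k, C (B j k) * X k)
    (g : MvPolynomial (Fin n) R) (hgi : degreeOf i g = 0)
    (hg : ∀ d, g.coeff d ∈ Ideal.span {t ^ (m + g.totalDegree * m)})
    (εt : MvPolynomial (Fin n) (Localization.Away t) ≃ₐ[Localization.Away t]
      MvPolynomial (Fin n) (Localization.Away t))
    (hεt1 : εt (X i) = X i + MvPolynomial.map (algebraMap R (Localization.Away t)) g)
    (hεt2 : ∀ j, j ≠ i → εt (X j) = X j) :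
    ∃ ψ : MvPolynomial (Fin n) R ≃ₐ[R] MvPolynomial (Fin n) R,
      (∀ p : MvPolynomial (Fin n) R,
        MvPolynomial.map (algebraMap R (Localization.Away t)) (ψ p) =
          (α⁻¹ * εt * α) (MvPolynomial.map (algebraMap R (Localization.Away t)) p)) ∧
      stab R n 1 ψ ∈ EA R (n + 1) := by
  classical
  set f : R →+* Localization.Away t := algebraMap R (Localization.Away t) with hf
  have hfinj : Function.Injective f :=
    IsLocalization.injective (Localization.Away t) (Submonoid.powers_le.mpr ht)
  have hu : IsUnit (f t) := IsLocalization.Away.algebraMap_isUnit t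
  -- choices of elements of R lifting t^m * B and t^m * (column i of A)
  have hBc' : ∀ j k, ∃ r, f r = f t ^ m * B j k := fun j k => hB j k
  choose bB hbB using hBc'
  have hAc' : ∀ j, ∃ r, f r = f t ^ m * A j i := fun j => hA j i
  choose cs hcs using hAc'
  -- the matrix identity (column i)
  have hBc : ∀ k, (∑ l, B k l * A l i) = if k = i then 1 else 0 := by
    intro k
    have := congrFun (congrFun hBA k) i
    rwa [Matrix.mul_apply, Matrix.one_apply] at this
  -- the coefficient lemma: h₀
  have hgdvd : ∀ u, ∃ r, coeff u g = t ^ (m + g.totalDegree * m) * r := by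
    intro u
    obtain ⟨r, hr⟩ := Ideal.mem_span_singleton.mp (hg u)
    exact ⟨r, hr⟩
  obtain ⟨h₀, hh₀⟩ := key_aux f t m B bB hbB g hgdvd
  -- the invariance property of h₀
  have INV : ∀ {σ' : Type} (u : Fin n → MvPolynomial σ' R) (q : MvPolynomial σ' R),
      aeval (fun k => u k + C (cs k) * q) h₀ = aeval u h₀ := by
    intro σ' u q
    exact inv_aux f hfinj t hu m i B (fun l => A l i) cs hcs hBc g hgi h₀ hh₀ u q
  -- the automorphism ψ
  set fψ : Fin n → MvPolynomial (Fin n) R := fun j => X j + C (cs j) * h₀ with hfψ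
  set gψ : Fin n → MvPolynomial (Fin n) R := fun j => X j - C (cs j) * h₀ with hgψ
  have haf : aeval fψ h₀ = h₀ := by
    have := INV (σ' := Fin n) X h₀
    rw [aeval_X_left_apply] at this
    exact this
  have hag : aeval gψ h₀ = h₀ := by
    have hgψ' : gψ = fun k => X k + C (cs k) * (-h₀) := by
      funext k; rw [hgψ]; ring
    rw [hgψ', INV (σ' := Fin n) X (-h₀), aeval_X_left_apply]
  have h1 : ∀ s, aeval fψ (gψ s) = X s := by
    intro s
    rw [hgψ]
    simp only [map_sub, aeval_X, map_mul, aeval_C, haf]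
    rw [hfψ]
    simp only [algebraMap_eq]
    ring
  have h2 : ∀ s, aeval gψ (fψ s) = X s := by
    intro s
    rw [hfψ]
    simp only [map_add, aeval_X, map_mul, aeval_C, hag]
    rw [hgψ]
    simp only [algebraMap_eq]
    ring
  refine ⟨mkAut fψ gψ h1 h2, ?_, ?_⟩
  · -- the base change property
    set ψ := mkAut fψ gψ h1 h2 with hψ
    have hmulapply : ∀ q, (α⁻¹ * εt * α) q = α.symm (εt (α q)) := fun q => rfl
    have hψX : ∀ j, ψ (X j) = X j + C (cs j) * h₀ := by
      intro j; rw [hψ, mkAut_apply, aeval_X, hfψ]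
    have hCfix : ∀ (β : MvPolynomial (Fin n) (Localization.Away t) ≃ₐ[Localization.Away t]
        MvPolynomial (Fin n) (Localization.Away t)) (a : Localization.Away t),
        β (C a) = C a := by
      intro β a
      rw [← MvPolynomial.algebraMap_eq]
      exact β.commutes a
    -- α.symm ∘ map f computed by substitution
    have hαsymm : ∀ j, α.symm (X j) = ∑ k, C (B j k) * X k := fun j => hαinv j
    have hsymm_map : ∀ p : MvPolynomial (Fin n) R, α.symm (MvPolynomial.map f p) =
        eval₂ ((C : Localization.Away t →+* MvPolynomial (Fin n) (Localization.Away t)).comp f)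
          (fun k => ∑ l, C (B k l) * X l) p := by
      intro p
      induction p using MvPolynomial.induction_on with
      | C a => rw [map_C, hCfix, eval₂_C, RingHom.comp_apply]
      | add p q hp hq => rw [map_add, map_add, hp, hq, eval₂_add]
      | mul_X p j hp => rw [map_mul, map_mul, hp, map_X, hαsymm j, eval₂_mul, eval₂_X]
    have hεtX : ∀ k, εt (X k) = X k + if k = i then MvPolynomial.map f g else 0 := by
      intro k
      by_cases hk : k = i
      · subst hk; rw [hεt1, if_pos rfl]
      · rw [hεt2 k hk, if_neg hk, add_zero]
    have hXcase : ∀ j, MvPolynomial.map f (ψ (X j)) = α.symm (εt (α (X j))) := by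
      intro j
      have hεα : εt (α (X j)) = (∑ k, C (A j k) * X k) + C (A j i) * MvPolynomial.map f g := by
        rw [hα j, map_sum]
        simp only [map_mul, hCfix, hεtX, mul_add, mul_ite, mul_zero]
        rw [Finset.sum_add_distrib, Finset.sum_ite_eq' Finset.univ i
          (fun k => C (A j k) * MvPolynomial.map f g), if_pos (Finset.mem_univ i)]
      rw [hεα, map_add, map_mul, hCfix, ← hα j, AlgEquiv.symm_apply_apply,
        hsymm_map g, hh₀, hψX j, map_add, map_X, map_mul, map_C, hcs j]
      rw [C_mul]
      ring
    intro p
    rw [hmulapply]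
    induction p using MvPolynomial.induction_on with
    | C a =>
        rw [show ψ (C a) = C a from by
            rw [← MvPolynomial.algebraMap_eq]; exact ψ.commutes a,
          map_C, hCfix α, hCfix εt, hCfix α.symm]
    | add p q hp hq => simp only [map_add, hp, hq]
    | mul_X p j hp =>
        simp only [map_mul, map_X]
        rw [hp, hXcase j]
  · -- EA membership of the stabilization
    have hCfixR : ∀ (β : MvPolynomial (Fin (n+1)) R ≃ₐ[R] MvPolynomial (Fin (n+1)) R) (r : R),
        β (C r) = C r := by
      intro β r
      rw [← MvPolynomial.algebraMap_eq]
      exact β.commutes r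
    have hτsymmH : (tauAut cs Finset.univ).symm (rename Fin.castSucc h₀)
        = rename Fin.castSucc h₀ := by
      show aeval (tauF cs Finset.univ (-1)) (rename Fin.castSucc h₀) = rename Fin.castSucc h₀
      rw [aeval_rename]
      have hc : (tauF cs Finset.univ (-1)) ∘ Fin.castSucc
          = fun k => X (Fin.castSucc k) + C (cs k) * (-(X (Fin.last n))) := by
        funext k
        simp only [Function.comp_apply, tauF_castSucc, Finset.mem_univ, if_true]
        simp only [C_mul, C_neg, C_1]
        ring
      rw [hc, INV, rename_eq_aeval]
      rfl
    have husymmH : (uAut h₀).symm (rename Fin.castSucc h₀) = rename Fin.castSucc h₀ := by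
      show aeval (uF h₀ (-1)) (rename Fin.castSucc h₀) = rename Fin.castSucc h₀
      exact aeval_uF_rename h₀ (-1)
    have hτcast : ∀ j : Fin n, tauAut cs Finset.univ (X j.castSucc)
        = X j.castSucc + C (cs j) * X (Fin.last n) := by
      intro j; rw [tauAut_castSucc, if_pos (Finset.mem_univ j)]
    have hτsymmcast : ∀ j : Fin n, (tauAut cs Finset.univ).symm (X j.castSucc)
        = X j.castSucc - C (cs j) * X (Fin.last n) := by
      intro j; rw [tauAut_symm_castSucc, if_pos (Finset.mem_univ j)]
    have happ : ∀ (a b : MvPolynomial (Fin (n+1)) R ≃ₐ[R] MvPolynomial (Fin (n+1)) R) p,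
        (a * b) p = a (b p) := fun _ _ _ => rfl
    have hinvapp : ∀ (e : MvPolynomial (Fin (n+1)) R ≃ₐ[R] MvPolynomial (Fin (n+1)) R) p,
        e⁻¹ p = e.symm p := fun _ _ => rfl
    have hstab : stab R n 1 (mkAut fψ gψ h1 h2) =
        (uAut h₀)⁻¹ * ((tauAut cs Finset.univ)⁻¹ * (uAut h₀ * tauAut cs Finset.univ)) := by
      refine aequiv_ext fun s => ?_
      induction s using Fin.lastCases with
      | last =>
          rw [stab_X_last]
          simp only [happ, hinvapp, map_add, map_sub, map_mul, hCfixR, hτcast, hτsymmcast,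
            tauAut_last, tauAut_symm_last, uAut_castSucc, uAut_symm_castSucc, uAut_last,
            uAut_symm_last, hτsymmH, husymmH]
          ring
      | cast j =>
          rw [stab_X_castSucc]
          have hL : (mkAut fψ gψ h1 h2) (X j) = X j + C (cs j) * h₀ := by
            rw [mkAut_apply, aeval_X]
          rw [hL, map_add, rename_X, map_mul, rename_C]
          simp only [happ, hinvapp, map_add, map_sub, map_mul, hCfixR, hτcast, hτsymmcast,
            tauAut_last, tauAut_symm_last, uAut_castSucc, uAut_symm_castSucc, uAut_last,
            uAut_symm_last, hτsymmH, husymmH]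
          ring
    rw [hstab]
    exact mul_mem (inv_mem (uAut_mem_EA h₀)) (mul_mem (inv_mem (tauAut_mem_EA cs Finset.univ))
      (mul_mem (uAut_mem_EA h₀) (tauAut_mem_EA cs Finset.univ)))

end
end

section
/- Let R be a commutative ring with SL_n(R) = E_n(R) (e.g., R local). Then TA_n(R) ∩ SA_n(R) = EA_n(R): a tame polynomial automorphism with Jacobian determinant 1 is a product of elementary automorphisms. -/
open MvPolynomial

noncomputable section

/-! The Jacobian determinant obeys the chain rule `J(φ ∘ ψ) = φ(J ψ) · J φ`, so it is `1` on `EA`,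
and the linear automorphism `x ↦ A x` has Jacobian `det A`. Write `A ∈ GL_n(R)` as an element of
`SL_n(R) = E_n(R)` times a diagonal matrix: the first factor gives an automorphism in `EA`, and
conjugating an elementary automorphism by a diagonal one rescales it into an elementary one. Hence
the linear automorphisms normalize `EA`, and every tame automorphism is `e ∘ (x ↦ A x)` with
`e ∈ EA`. Jacobian `1` then forces `det A = 1`, so the linear factor lies in `EA` as well. -/

theorem MvPolynomial.algEquiv_C_s15 {R σ : Type*} [CommSemiring R]
    (φ : MvPolynomial σ R ≃ₐ[R] MvPolynomial σ R) (a : R) : φ (C a) = C a :=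
  φ.commutes a

theorem MvPolynomial.vars_bind₁_subset {R σ : Type*} [CommRing R] {g : σ → MvPolynomial σ R}
    (hg : ∀ k, (g k).vars ⊆ {k}) (f : MvPolynomial σ R) : (bind₁ g f).vars ⊆ f.vars := by
  classical
  exact (vars_bind₁ g f).trans
    (Finset.biUnion_subset.mpr fun k hk => (hg k).trans (Finset.singleton_subset_iff.mpr hk))

theorem MvPolynomial.vars_C_mul_X_subset {R σ : Type*} [CommRing R] (a : R) (k : σ) :
    (C a * X k : MvPolynomial σ R).vars ⊆ {k} := fun _ hl =>
  Finset.mem_singleton.mpr <| by_contra fun h => mem_vars_iff_degreeOf_ne_zero.mp hl <|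
    Nat.eq_zero_of_le_zero ((degreeOf_C_mul_le _ _ _).trans (degreeOf_X_of_ne h).le)

theorem MvPolynomial.degreeOf_bind₁_C_mul_X_eq_zero {R σ : Type*} [CommRing R] (a : σ → R)
    {i : σ} {f : MvPolynomial σ R} (hf : degreeOf i f = 0) :
    degreeOf i (bind₁ (fun k => C (a k) * X k) f) = 0 := by
  by_contra h
  exact mem_vars_iff_degreeOf_ne_zero.mp
    (vars_bind₁_subset (fun k => vars_C_mul_X_subset (a k) k) f
      (mem_vars_iff_degreeOf_ne_zero.mpr h)) hf

theorem MvPolynomial.IsHomogeneous.eq_sum_monomial_single {R σ : Type*} [CommRing R] [Fintype σ]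
    {p : MvPolynomial σ R} (hp : p.IsHomogeneous 1) :
    p = ∑ j, monomial (Finsupp.single j 1) (coeff (Finsupp.single j 1) p) := by
  classical
  ext d
  rw [coeff_sum]
  by_cases hd : ∃ j, Finsupp.single j 1 = d
  · obtain ⟨j, rfl⟩ := hd
    rw [Finset.sum_eq_single j (fun k _ hk => by
      rw [coeff_monomial, if_neg ((Finsupp.single_left_injective one_ne_zero).ne hk)])
      (by simp), coeff_monomial, if_pos rfl]
  · rw [Finset.sum_eq_zero fun j _ => by rw [coeff_monomial, if_neg (not_exists.mp hd j)]]
    refine hp.coeff_eq_zero fun h => hd ?_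
    rwa [← Set.mem_range, Finsupp.range_single_one]

theorem MvPolynomial.pderiv_algHom {R σ : Type*} [CommRing R] [Fintype σ] [DecidableEq σ]
    (φ : MvPolynomial σ R →ₐ[R] MvPolynomial σ R) (j : σ) (p : MvPolynomial σ R) :
    pderiv j (φ p) = ∑ k, φ (pderiv k p) * pderiv j (φ (X k)) := by
  induction p using MvPolynomial.induction_on with
  | C a => simp
  | add p q hp hq => simp only [map_add, hp, hq, add_mul, Finset.sum_add_distrib]
  | mul_X p i hp =>
    simp only [map_mul, Derivation.leibniz, pderiv_X, hp, map_add, add_mul, smul_eq_mul,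
      Finset.sum_add_distrib, Pi.single_apply]
    simp [Finset.mul_sum, mul_comm, mul_left_comm]

section Jacobian

variable {R : Type*} [CommRing R] {n : ℕ}

theorem jacDet_mul (φ ψ : MvPolynomial (Fin n) R ≃ₐ[R] MvPolynomial (Fin n) R) :
    jacDet (φ * ψ) = φ (jacDet ψ) * jacDet φ := by
  have hjac : (Matrix.of fun i j => pderiv j ((φ * ψ) (X i))) =
      (Matrix.of fun i j => pderiv j (ψ (X i))).map φ *
        Matrix.of fun i j => pderiv j (φ (X i)) :=
    Matrix.ext fun i j => pderiv_algHom φ.toAlgHom j (ψ (X i))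
  unfold jacDet
  rw [hjac, Matrix.det_mul]
  exact congrArg (· * _) (φ.map_det _).symm

theorem jacDet_one : jacDet (1 : MvPolynomial (Fin n) R ≃ₐ[R] MvPolynomial (Fin n) R) = 1 := by
  have : (Matrix.of fun i j =>
      pderiv j ((1 : MvPolynomial (Fin n) R ≃ₐ[R] MvPolynomial (Fin n) R) (X i))) = 1 := by
    ext i j
    simp [pderiv_X, Pi.single_apply, Matrix.one_apply]
  rw [jacDet, this, Matrix.det_one]

theorem isUnit_jacDet (φ : MvPolynomial (Fin n) R ≃ₐ[R] MvPolynomial (Fin n) R) :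
    IsUnit (jacDet φ) := by
  have h := jacDet_mul φ φ⁻¹
  rw [mul_inv_cancel, jacDet_one] at h
  exact IsUnit.of_mul_eq_one_right _ h.symm

theorem jacDet_eq_one_of_isElementaryAut
    {e : MvPolynomial (Fin n) R ≃ₐ[R] MvPolynomial (Fin n) R} (he : IsElementaryAut e) :
    jacDet e = 1 := by
  obtain ⟨i, f, hf, hei, hej⟩ := he
  set c : Fin n → MvPolynomial (Fin n) R := fun j => pderiv j (e (X i))
  have hjac : (Matrix.of fun k j => pderiv j (e (X k))) =
      (1 : Matrix (Fin n) (Fin n) _).updateRow i (∑ k, c k • (1 : Matrix (Fin n) (Fin n) _) k) := by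
    refine Matrix.ext fun k j => ?_
    by_cases hk : k = i
    · subst hk
      simp [c, Matrix.one_apply]
    · simp [hk, hej k hk, pderiv_X, Pi.single_apply, Matrix.one_apply]
  have hci : c i = 1 := by
    simp [c, hei, pderiv_eq_zero_of_notMem_vars (mem_vars_iff_degreeOf_ne_zero.not_left.mpr hf)]
  rw [jacDet, hjac, Matrix.det_updateRow_sum, hci, Matrix.det_one, one_smul]

end Jacobian

def SA (R : Type*) [CommRing R] (n : ℕ) :
    Subgroup (MvPolynomial (Fin n) R ≃ₐ[R] MvPolynomial (Fin n) R) where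
  carrier := {φ | jacDet φ = 1}
  mul_mem' {φ ψ} (hφ : jacDet φ = 1) (hψ : jacDet ψ = 1) := by
    rw [Set.mem_ofPred_eq, jacDet_mul, hφ, hψ, map_one, one_mul]
  one_mem' := jacDet_one
  inv_mem' {φ} hφ := by
    have h := jacDet_mul φ φ⁻¹
    rw [mul_inv_cancel, jacDet_one, hφ, mul_one] at h
    exact φ.injective (h.symm.trans (map_one φ).symm)

theorem mem_SA {R : Type*} [CommRing R] {n : ℕ}
    {φ : MvPolynomial (Fin n) R ≃ₐ[R] MvPolynomial (Fin n) R} : φ ∈ SA R n ↔ jacDet φ = 1 :=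
  Iff.rfl

theorem EA_le_SA (R : Type*) [CommRing R] (n : ℕ) : EA R n ≤ SA R n :=
  (Subgroup.closure_le _).mpr fun _ => jacDet_eq_one_of_isElementaryAut

theorem EA_le_TA (R : Type*) [CommRing R] (n : ℕ) : EA R n ≤ TA R n :=
  Subgroup.closure_mono Set.subset_union_left

section Linear

open scoped Matrix

variable {R σ : Type*} [CommRing R] [Fintype σ] [DecidableEq σ]

/-- `X i ↦ ∑ j, A j i • X j`; the transpose makes this multiplicative rather than
anti-multiplicative. -/
def linearSubst : Matrix σ σ R →* (MvPolynomial σ R →ₐ[R] MvPolynomial σ R) where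
  toFun M := bind₁ Mᵀ.toMvPolynomial
  map_one' := by rw [Matrix.transpose_one, Matrix.toMvPolynomial_one, bind₁_X_left]; rfl
  map_mul' M N := algHom_ext fun i => by
    rw [AlgHom.mul_apply, bind₁_X_right, bind₁_X_right, Matrix.transpose_mul,
      Matrix.toMvPolynomial_mul]

theorem linearSubst_X (M : Matrix σ σ R) (i : σ) :
    linearSubst M (X i) = Mᵀ.toMvPolynomial i :=
  bind₁_X_right _ _

theorem pderiv_linearSubst_X (M : Matrix σ σ R) (i j : σ) :
    pderiv j (linearSubst M (X i)) = C (M j i) := by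
  simp [linearSubst_X, Matrix.toMvPolynomial, ← C_mul_X_eq_monomial, pderiv_X, Pi.single_apply]

def linearAut : GL σ R →* (MvPolynomial σ R ≃ₐ[R] MvPolynomial σ R) :=
  (AlgEquiv.algHomUnitsEquiv R _).toMonoidHom.comp (Units.map linearSubst)

theorem linearAut_apply (A : GL σ R) (p : MvPolynomial σ R) :
    linearAut A p = linearSubst (A : Matrix σ σ R) p :=
  rfl

end Linear

section LinearJacobian

open scoped Matrix

variable {R : Type*} [CommRing R] {n : ℕ}

theorem jacDet_eq_C_det {φ : MvPolynomial (Fin n) R ≃ₐ[R] MvPolynomial (Fin n) R}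
    {M : Matrix (Fin n) (Fin n) R} (h : (φ : MvPolynomial (Fin n) R →ₐ[R] _) = linearSubst M) :
    jacDet φ = C M.det := by
  have hjac : (Matrix.of fun i j => pderiv j (φ (X i))) = Mᵀ.map C := by
    refine Matrix.ext fun i j => ?_
    rw [Matrix.of_apply, ← AlgEquiv.coe_toAlgHom, h, pderiv_linearSubst_X]
    rfl
  rw [jacDet, hjac, ← RingHom.mapMatrix_apply, ← RingHom.map_det, Matrix.det_transpose]

theorem jacDet_linearAut (A : GL (Fin n) R) :
    jacDet (linearAut A) = C (A : Matrix (Fin n) (Fin n) R).det :=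
  jacDet_eq_C_det rfl

theorem exists_linearAut_eq_of_isLinearAut
    {φ : MvPolynomial (Fin n) R ≃ₐ[R] MvPolynomial (Fin n) R} (hφ : IsLinearAut φ) :
    ∃ A : GL (Fin n) R, linearAut A = φ := by
  set M : Matrix (Fin n) (Fin n) R := Matrix.of fun j i => coeff (Finsupp.single j 1) (φ (X i))
  have hM : (φ : MvPolynomial (Fin n) R →ₐ[R] _) = linearSubst M := algHom_ext fun i => by
    rw [linearSubst_X]
    exact (hφ i).eq_sum_monomial_single
  have hdet : IsUnit M.det := by
    simpa [jacDet_eq_C_det hM] using (isUnit_jacDet φ).map (constantCoeff (R := R) (σ := Fin n))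
  obtain ⟨A, hA⟩ := (Matrix.isUnit_iff_isUnit_det M).mpr hdet
  exact ⟨A, AlgEquiv.coe_toAlgHom_injective (by rw [hM, ← hA]; rfl)⟩

end LinearJacobian

def SLEqE (R : Type*) [CommRing R] (n : ℕ) : Prop :=
  ∀ M : Matrix (Fin n) (Fin n) R, M.det = 1 →
    ∃ L : List (Matrix.TransvectionStruct (Fin n) R),
      M = (L.map Matrix.TransvectionStruct.toMatrix).prod

def Matrix.TransvectionStruct.toGL {ι R : Type*} [Fintype ι] [DecidableEq ι] [CommRing R]
    (t : Matrix.TransvectionStruct ι R) : GL ι R :=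
  ⟨t.toMatrix, t.inv.toMatrix, t.mul_inv, t.inv_mul⟩

section Transvection

open scoped Matrix

variable {R : Type*} [CommRing R] {n : ℕ}

theorem isElementaryAut_linearAut_toGL (t : Matrix.TransvectionStruct (Fin n) R) :
    IsElementaryAut (linearAut t.toGL) := by
  obtain ⟨i, j, hij, c⟩ := t
  have hX : ∀ k, linearAut (Matrix.TransvectionStruct.toGL ⟨i, j, hij, c⟩) (X k) =
      X k + if k = j then C c * X i else 0 := by
    intro k
    simp only [Matrix.TransvectionStruct.toGL, Matrix.TransvectionStruct.toMatrix_mk,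
      Matrix.transvection, linearAut_apply, linearSubst_X, Matrix.transpose_add,
      Matrix.transpose_one, Matrix.transpose_single, Matrix.toMvPolynomial_add,
      Matrix.toMvPolynomial_one, Pi.add_apply, add_right_inj]
    split_ifs with hk
    · subst hk
      simp [Matrix.toMvPolynomial, Matrix.single_apply, C_mul_X_eq_monomial, apply_ite (monomial _)]
    · simp [Matrix.toMvPolynomial, Ne.symm hk]
  refine ⟨j, C c * X i, ?_, by rw [hX, if_pos rfl], fun k hk => by rw [hX, if_neg hk, add_zero]⟩
  exact Nat.eq_zero_of_le_zero ((degreeOf_C_mul_le _ _ _).trans (degreeOf_X_of_ne hij.symm).le)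

theorem linearAut_mem_EA_of_det_eq_one
    (hSL : SLEqE R n)
    {A : GL (Fin n) R} (hA : (A : Matrix (Fin n) (Fin n) R).det = 1) : linearAut A ∈ EA R n := by
  obtain ⟨L, hL⟩ := hSL _ hA
  have hprod : A = (L.map Matrix.TransvectionStruct.toGL).prod :=
    Units.ext (by rw [hL, ← Units.coeHom_apply, map_list_prod, List.map_map]; rfl)
  rw [hprod, map_list_prod, List.map_map]
  refine (EA R n).list_prod_mem fun e he => ?_
  obtain ⟨t, -, rfl⟩ := List.mem_map.mp he
  exact Subgroup.subset_closure (isElementaryAut_linearAut_toGL t)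

end Transvection

section Diagonal

variable {R σ : Type*} [CommRing R] [Fintype σ] [DecidableEq σ]

def diagonalGL : (σ → Rˣ) →* GL σ R :=
  (Units.map (Matrix.diagonalRingHom σ R : (σ → R) →* Matrix σ σ R)).comp
    MulEquiv.piUnits.symm.toMonoidHom

theorem coe_diagonalGL (d : σ → Rˣ) :
    (diagonalGL d : Matrix σ σ R) = Matrix.diagonal fun k => (d k : R) :=
  rfl

theorem linearAut_diagonalGL_apply (d : σ → Rˣ) (f : MvPolynomial σ R) :
    linearAut (diagonalGL d) f = bind₁ (fun k => C (d k : R) * X k) f := by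
  have h : linearSubst (diagonalGL d : Matrix σ σ R) = bind₁ fun k => C (d k : R) * X k :=
    algHom_ext fun k => by
      simp [linearSubst_X, coe_diagonalGL, Matrix.toMvPolynomial, Matrix.diagonal_apply,
        C_mul_X_eq_monomial, apply_ite (monomial _)]
  exact DFunLike.congr_fun h f

theorem exists_det_mul_diagonalGL_inv_eq_one (A : GL σ R) :
    ∃ d : σ → Rˣ, ((A * (diagonalGL d)⁻¹ : GL σ R) : Matrix σ σ R).det = 1 := by
  obtain ⟨d, hd⟩ : ∃ d : σ → Rˣ, ∏ k, d k = Matrix.GeneralLinearGroup.det A := by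
    cases isEmpty_or_nonempty σ with
    | inl _ => exact ⟨1, Units.ext (by simp)⟩
    | inr h =>
      obtain ⟨i⟩ := h
      exact ⟨Pi.mulSingle i (Matrix.GeneralLinearGroup.det A), by simp [Finset.prod_pi_mulSingle']⟩
  have hdiag : Matrix.GeneralLinearGroup.det (diagonalGL d) = ∏ k, d k :=
    Units.ext (by simp [coe_diagonalGL, Matrix.det_diagonal])
  refine ⟨d, ?_⟩
  rw [← Matrix.GeneralLinearGroup.val_det_apply, map_mul, map_inv, hdiag, hd, mul_inv_cancel,
    Units.val_one]

end Diagonal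

section Tame

variable {R : Type*} [CommRing R] {n : ℕ}

theorem IsElementaryAut.conj_linearAut_diagonalGL
    {e : MvPolynomial (Fin n) R ≃ₐ[R] MvPolynomial (Fin n) R} (he : IsElementaryAut e)
    (d : Fin n → Rˣ) :
    IsElementaryAut (linearAut (diagonalGL d) * e * (linearAut (diagonalGL d))⁻¹) := by
  obtain ⟨i, f, hf, hei, hej⟩ := he
  set s := linearAut (diagonalGL d)
  have hs : ∀ p, s p = bind₁ (fun k => C (d k : R) * X k) p := linearAut_diagonalGL_apply d
  have hconj : ∀ k, (s * e * s⁻¹) (X k) = C ((d k)⁻¹ : Rˣ).val * s (e (X k)) := by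
    intro k
    rw [show s⁻¹ = linearAut (diagonalGL d⁻¹) by rw [map_inv, map_inv], AlgEquiv.mul_apply,
      AlgEquiv.mul_apply, linearAut_diagonalGL_apply d⁻¹,
      bind₁_X_right, map_mul, map_mul, algEquiv_C_s15, algEquiv_C_s15]
    rfl
  have hcancel : ∀ k, C ((d k)⁻¹ : Rˣ).val * (C (d k : R) * X k) = X k := fun k => by
    rw [← mul_assoc, ← C_mul, Units.inv_mul, C_1, one_mul]
  refine ⟨i, C ((d i)⁻¹ : Rˣ).val * s f, ?_, ?_, fun k hk => ?_⟩
  · refine Nat.eq_zero_of_le_zero ((degreeOf_C_mul_le _ _ _).trans ?_)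
    rw [hs, degreeOf_bind₁_C_mul_X_eq_zero _ hf]
  · rw [hconj, hei, map_add, hs (X i), bind₁_X_right, mul_add, hcancel]
  · rw [hconj, hej k hk, hs, bind₁_X_right, hcancel]

theorem range_linearAut_le_normalizer_EA
    (hSL : SLEqE R n) :
    (linearAut : GL (Fin n) R →* _).range ≤ Subgroup.normalizer (EA R n : Set _) := by
  rw [EA, Subgroup.le_normalizer_closure_iff]
  rintro _ ⟨A, rfl⟩ e he
  obtain ⟨d, hd⟩ := exists_det_mul_diagonalGL_inv_eq_one A
  have hs := linearAut_mem_EA_of_det_eq_one hSL hd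
  set s := linearAut (A * (diagonalGL d)⁻¹)
  set t := linearAut (diagonalGL d)
  have hA : linearAut A = s * t := by rw [← map_mul, inv_mul_cancel_right]
  have hconj : linearAut A * e * (linearAut A)⁻¹ = s * (t * e * t⁻¹) * s⁻¹ := by rw [hA]; group
  rw [hconj]
  exact mul_mem (mul_mem hs (Subgroup.subset_closure (he.conj_linearAut_diagonalGL d))) (inv_mem hs)

theorem TA_le_EA_sup_range_linearAut :
    TA R n ≤ EA R n ⊔ (linearAut : GL (Fin n) R →* _).range :=
  (Subgroup.closure_le _).mpr fun _ hφ => hφ.elim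
    (fun he => le_sup_left (a := EA R n) (Subgroup.subset_closure he))
    (fun hl => le_sup_right (a := EA R n) (exists_linearAut_eq_of_isLinearAut hl))

end Tame

/-- If every matrix in `SL_n(R)` is a product of elementary (transvection) matrices —
e.g. if `R` is local — then a tame polynomial automorphism with Jacobian determinant `1`
is a product of elementary automorphisms: `TA_n(R) ∩ SA_n(R) = EA_n(R)`. -/
theorem TA_inter_SA_eq_EA
    (R : Type*) [CommRing R] (n : ℕ)
    (hSL : ∀ M : Matrix (Fin n) (Fin n) R, M.det = 1 →
      ∃ L : List (Matrix.TransvectionStruct (Fin n) R),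
        M = (L.map Matrix.TransvectionStruct.toMatrix).prod)
    (φ : MvPolynomial (Fin n) R ≃ₐ[R] MvPolynomial (Fin n) R) :
    (φ ∈ TA R n ∧ jacDet φ = 1) ↔ φ ∈ EA R n := by
  refine ⟨fun ⟨hTA, hjac⟩ => ?_, fun he => ⟨EA_le_TA R n he, EA_le_SA R n he⟩⟩
  have hφ : φ ∈ ((EA R n ⊔ (linearAut : GL (Fin n) R →* _).range : Subgroup _) : Set _) :=
    TA_le_EA_sup_range_linearAut hTA
  rw [Subgroup.coe_mul_of_right_le_normalizer_left _ _ (range_linearAut_le_normalizer_EA hSL)] at hφ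
  obtain ⟨e, he, _, ⟨A, rfl⟩, rfl⟩ := hφ
  have hA : (A : Matrix (Fin n) (Fin n) R).det = 1 := by
    rw [jacDet_mul, jacDet_linearAut, mem_SA.mp (EA_le_SA R n he), mul_one, algEquiv_C_s15] at hjac
    exact C_injective _ _ (hjac.trans C_1.symm)
  exact mul_mem he (linearAut_mem_EA_of_det_eq_one hSL hA)

end
end
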